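/- Soundness of the prediction axiom: every instance of axiom (PD), namely [X⃗:=x⃗]Kψ ↔ ⋁_{o⃗ ∈ R(O)} ([X⃗:=x⃗]O=o⃗ ∧ [[X⃗:=x⃗]O=o⃗ !] K[X⃗:=x⃗]ψ), is true at every pointed epistemic causal model with observables under the semantics with observables ⊨^O (including the case where X⃗ is empty). -/
import Mathlib


open Classical

/-- A finite signature: variables sorted into exogenous and endogenous, each with a
finite nonempty range of values. -/
structure Sig : Type 1 where
  Var : Type
  exo : Var → Prop
  Val : Var → Type
  [decEqVar : DecidableEq Var]
  [finVar : Fintype Var]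
  [neVar : Nonempty Var]
  [decEqVal : ∀ X : Var, DecidableEq (Val X)]
  [finVal : ∀ X : Var, Fintype (Val X)]
  [neVal : ∀ X : Var, Nonempty (Val X)]

attribute [instance] Sig.decEqVar Sig.finVar Sig.neVar Sig.decEqVal Sig.finVal Sig.neVal

variable {S : Sig}

/-- A valuation: a value for each variable. -/
abbrev Env (S : Sig) : Type := ∀ X : S.Var, S.Val X

instance : Nonempty (Env S) := ⟨fun X => Classical.arbitrary (S.Val X)⟩

/-- Values for all variables other than `V`. -/
abbrev Others (S : Sig) (V : S.Var) : Type := ∀ X : {X : S.Var // X ≠ V}, S.Val X.val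

/-- The restriction of a valuation to the variables other than `V`. -/
def Env.restrict (A : Env S) (V : S.Var) : Others S V := fun X => A X.val

/-- A family of structural functions (only the components at endogenous variables
are meaningful). -/
abbrev StructFuns (S : Sig) : Type := ∀ V : S.Var, Others S V → S.Val V

/-- A valuation complies with the structural functions: the value of each endogenous
variable is obtained by applying its structural function to the values of all
other variables. -/
def Complies (F : StructFuns S) (A : Env S) : Prop :=
  ∀ V : S.Var, ¬ S.exo V → A V = F V (A.restrict V)

/-- The endogenous variable `V` is directly causally affected by `X` under `F`. -/
def DirAff (F : StructFuns S) (X V : S.Var) : Prop :=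
  ¬ S.exo V ∧ ∃ (h : X ≠ V) (g : Others S V) (x₁ x₂ : S.Val X),
    x₁ ≠ x₂ ∧
      F V (Function.update g ⟨X, h⟩ x₁) ≠ F V (Function.update g ⟨X, h⟩ x₂)

/-- `F` is recursive: the transitive closure of the direct causal dependence
relation is asymmetric (transitivity is automatic for `Relation.TransGen`). -/
def RecursiveF (F : StructFuns S) : Prop :=
  ∀ a b : S.Var, Relation.TransGen (DirAff F) a b → ¬ Relation.TransGen (DirAff F) b a

/-- An assignment of values to a set of pairwise distinct variables. -/
abbrev Intervention (S : Sig) : Type := ∀ X : S.Var, Option (S.Val X)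

/-- The empty assignment. -/
def iEmpty (S : Sig) : Intervention S := fun _ => none

/-- Extend an assignment by additionally setting `Y` to `y` (overriding). -/
def iUpd (I : Intervention S) (Y : S.Var) (y : S.Val Y) : Intervention S :=
  Function.update I Y (some y)

/-- Combine assignments, the second overriding the first:  `[X⃗ := x⃗, Y⃗ := y⃗]`. -/
def icomp (I J : Intervention S) : Intervention S := fun W =>
  match J W with
  | some v => some v
  | none => I W

/-- The intervened family of structural functions: intervened variables get the
constant function returning the assigned value; the rest are unchanged. -/
def intF (F : StructFuns S) (I : Intervention S) : StructFuns S :=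
  fun V g => (I V).getD (F V g)

/-- `A'` is the result of intervening with `I` on the valuation `A` (w.r.t. `F`):
exogenous intervened variables get the assigned value, exogenous non-intervened
variables keep their value, and each endogenous variable complies with its new
structural function. -/
def IntervenedVal (F : StructFuns S) (A : Env S) (I : Intervention S) (A' : Env S) : Prop :=
  (∀ X : S.Var, S.exo X → ∀ v : S.Val X, I X = some v → A' X = v) ∧
  (∀ X : S.Var, S.exo X → I X = none → A' X = A X) ∧
  (∀ V : S.Var, ¬ S.exo V → A' V = intF F I V (A'.restrict V))

/-- The intervened valuation (unique when `F` is recursive). -/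
noncomputable def intVal (F : StructFuns S) (A : Env S) (I : Intervention S) : Env S :=
  Classical.epsilon (IntervenedVal F A I)

/-- The language L_PAKC: atoms `Y = y`, negation, conjunction, knowledge,
public announcements, and interventionist counterfactual operators. -/
inductive Form (S : Sig) : Type where
  | eq (Y : S.Var) (y : S.Val Y) : Form S
  | neg (φ : Form S) : Form S
  | conj (φ ψ : Form S) : Form S
  | know (φ : Form S) : Form S
  | ann (α φ : Form S) : Form S
  | int (I : Intervention S) (φ : Form S) : Form S

namespace Form

/-- Material implication, defined from `¬` and `∧` as usual. -/
def impl (φ ψ : Form S) : Form S := Form.neg (Form.conj φ (Form.neg ψ))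

/-- Disjunction, defined from `¬` and `∧` as usual. -/
def orF (φ ψ : Form S) : Form S := Form.neg (Form.conj (Form.neg φ) (Form.neg ψ))

/-- Biconditional. -/
def iffF (φ ψ : Form S) : Form S := Form.conj (impl φ ψ) (impl ψ φ)

end Form

/-- A canonical contradiction. -/
noncomputable def botF (S : Sig) : Form S :=
  let X : S.Var := Classical.arbitrary S.Var
  let x : S.Val X := Classical.arbitrary (S.Val X)
  Form.conj (Form.eq X x) (Form.neg (Form.eq X x))

/-- A canonical tautology. -/
noncomputable def topF (S : Sig) : Form S := Form.neg (botF S)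

/-- Disjunction of a list of formulas (the empty disjunction is a contradiction). -/
noncomputable def bigOr : List (Form S) → Form S
  | [] => botF S
  | φ :: l => l.foldl Form.orF φ

/-- Conjunction of a list of formulas (the empty conjunction is a tautology). -/
noncomputable def bigConj : List (Form S) → Form S
  | [] => topF S
  | φ :: l => l.foldl Form.conj φ

/-- `φ` is an instance of a propositional tautology: it evaluates to `true` under
every Boolean valuation that respects negation and conjunction (treating all
other formulas as atoms). -/
def Tauto (φ : Form S) : Prop :=
  ∀ v : Form S → Bool,
    (∀ ψ : Form S, v (Form.neg ψ) = !(v ψ)) →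
    (∀ ψ χ : Form S, v (Form.conj ψ χ) = (v ψ && v χ)) →
    v φ = true

/-- The assignment `[Z⃗ := z⃗, X := x]` where `Z⃗` lists all variables other than
`X` and `V`, used in the formula `X ⇝ V`. -/
def ltInt (X V : S.Var) (g : ∀ W : {W : S.Var // W ≠ X ∧ W ≠ V}, S.Val W.val)
    (x : S.Val X) : Intervention S := fun W =>
  if h : W = X then some (h.symm ▸ x)
  else if h' : W = V then none
  else some (g ⟨W, ⟨h, h'⟩⟩)

/-- The formula `X ⇝ V`: the disjunction, over tuples `z⃗` of values for all
variables other than `X` and `V`, distinct values `x₁ ≠ x₂` of `X` and distinct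
values `v₁ ≠ v₂` of `V`, of `[Z⃗:=z⃗, X:=x₁]V=v₁ ∧ [Z⃗:=z⃗, X:=x₂]V=v₂`. -/
noncomputable def leadsTo (X V : S.Var) : Form S :=
  bigOr ((Finset.univ.filter
      (fun p : (∀ W : {W : S.Var // W ≠ X ∧ W ≠ V}, S.Val W.val) ×
          (S.Val X × S.Val X) × (S.Val V × S.Val V) =>
        p.2.1.1 ≠ p.2.1.2 ∧ p.2.2.1 ≠ p.2.2.2)).toList.map
    (fun p =>
      Form.conj
        (Form.int (ltInt X V p.1 p.2.1.1) (Form.eq V p.2.2.1))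
        (Form.int (ltInt X V p.1 p.2.1.2) (Form.eq V p.2.2.2))))

/-- The chain `X₀ ⇝ X₁ ∧ ⋯ ∧ X_k ⇝ X_{k+1}`. -/
noncomputable def chainConj (X : ℕ → S.Var) : ℕ → Form S
  | 0 => leadsTo (X 0) (X 1)
  | n + 1 => Form.conj (chainConj X n) (leadsTo (X (n + 1)) (X (n + 2)))

/-- `ψ₁ → (ψ₂ → ⋯ → (ψₙ → φ))` for a list of premises. -/
def impsFrom : List (Form S) → Form S → Form S
  | [], φ => φ
  | ψ :: l, φ => Form.impl ψ (impsFrom l φ)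

/-- Satisfaction of an L_PAKC formula at a pointed epistemic causal model with
observables `Obs` (the semantics `⊨ᴼ`): after an intervention, the epistemic
state retains only those intervened valuations that agree with the intervened
actual valuation on all observables. -/
def SatO (Obs : Finset S.Var) : Form S → StructFuns S → Set (Env S) → Env S → Prop
  | Form.eq Y y, _, _, A => A Y = y
  | Form.neg φ, F, T, A => ¬ SatO Obs φ F T A
  | Form.conj φ ψ, F, T, A => SatO Obs φ F T A ∧ SatO Obs ψ F T A
  | Form.know φ, F, T, _ => ∀ B ∈ T, SatO Obs φ F T B
  | Form.ann α φ, F, T, A =>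
      SatO Obs α F T A → SatO Obs φ F {B | B ∈ T ∧ SatO Obs α F T B} A
  | Form.int I φ, F, T, A =>
      SatO Obs φ (intF F I)
        {B' | ∃ B ∈ T, B' = intVal F B I ∧ ∀ W ∈ Obs, B' W = intVal F A I W}
        (intVal F A I)

/-- The formula `O⃗ = o⃗`: the conjunction of `O = o⃗(O)` over the observables. -/
noncomputable def obsEq (Obs : Finset S.Var)
    (o : ∀ W : {W : S.Var // W ∈ Obs}, S.Val W.val) : Form S :=
  bigConj (Obs.attach.toList.map (fun W => Form.eq W.val (o W)))

/-- All tuples of values for the observables (an enumeration of `R(O⃗)`). -/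
noncomputable def obsTuples (Obs : Finset S.Var) :
    List (∀ W : {W : S.Var // W ∈ Obs}, S.Val W.val) :=
  (Finset.univ : Finset (∀ W : {W : S.Var // W ∈ Obs}, S.Val W.val)).toList

/-- Axiom (OC): `[X⃗:=x⃗] ⋁_{o⃗ ∈ R(O⃗)} K(O⃗=o⃗)`. -/
noncomputable def ocForm (Obs : Finset S.Var) (I : Intervention S) : Form S :=
  Form.int I (bigOr ((obsTuples Obs).map (fun o => Form.know (obsEq Obs o))))

/-- Axiom (PD): `[X⃗:=x⃗]Kψ ↔ ⋁_{o⃗ ∈ R(O⃗)} ([X⃗:=x⃗]O⃗=o⃗ ∧ [[X⃗:=x⃗]O⃗=o⃗ !] K[X⃗:=x⃗]ψ)`. -/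
noncomputable def pdForm (Obs : Finset S.Var) (I : Intervention S) (ψ : Form S) : Form S :=
  Form.iffF (Form.int I (Form.know ψ))
    (bigOr ((obsTuples Obs).map (fun o =>
      Form.conj (Form.int I (obsEq Obs o))
        (Form.ann (Form.int I (obsEq Obs o)) (Form.know (Form.int I ψ))))))

section PDAux

variable {Obs : Finset S.Var} {F : StructFuns S} {T : Set (Env S)} {A : Env S}

lemma satO_orF {φ χ : Form S} :
    SatO Obs (Form.orF φ χ) F T A ↔ SatO Obs φ F T A ∨ SatO Obs χ F T A := by
  simp only [Form.orF, SatO]; tauto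

lemma satO_impl {φ χ : Form S} :
    SatO Obs (Form.impl φ χ) F T A ↔ (SatO Obs φ F T A → SatO Obs χ F T A) := by
  simp only [Form.impl, SatO]; tauto

lemma satO_botF : ¬ SatO Obs (botF S) F T A := fun h => h.2 h.1

lemma satO_topF : SatO Obs (topF S) F T A := fun h => h.2 h.1

lemma satO_foldl_orF (l : List (Form S)) (φ : Form S) :
    SatO Obs (l.foldl Form.orF φ) F T A ↔
      SatO Obs φ F T A ∨ ∃ χ ∈ l, SatO Obs χ F T A := by
  induction l generalizing φ with
  | nil => simp
  | cons χ l ih =>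
    simp only [List.foldl, ih, satO_orF, List.mem_cons]
    constructor
    · rintro ((h | h) | ⟨ξ, hξ, h⟩)
      · exact Or.inl h
      · exact Or.inr ⟨χ, Or.inl rfl, h⟩
      · exact Or.inr ⟨ξ, Or.inr hξ, h⟩
    · rintro (h | ⟨ξ, (rfl | hξ), h⟩)
      · exact Or.inl (Or.inl h)
      · exact Or.inl (Or.inr h)
      · exact Or.inr ⟨ξ, hξ, h⟩

lemma satO_bigOr (l : List (Form S)) :
    SatO Obs (bigOr l) F T A ↔ ∃ χ ∈ l, SatO Obs χ F T A := by
  cases l with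
  | nil => simp [bigOr, satO_botF]
  | cons φ l =>
    simp only [bigOr, satO_foldl_orF, List.mem_cons]
    constructor
    · rintro (h | ⟨ξ, hξ, h⟩)
      · exact ⟨φ, Or.inl rfl, h⟩
      · exact ⟨ξ, Or.inr hξ, h⟩
    · rintro ⟨ξ, (rfl | hξ), h⟩
      · exact Or.inl h
      · exact Or.inr ⟨ξ, hξ, h⟩

lemma satO_foldl_conj (l : List (Form S)) (φ : Form S) :
    SatO Obs (l.foldl Form.conj φ) F T A ↔
      SatO Obs φ F T A ∧ ∀ χ ∈ l, SatO Obs χ F T A := by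
  induction l generalizing φ with
  | nil => simp
  | cons χ l ih =>
    simp only [List.foldl, ih, List.mem_cons]
    show (SatO Obs φ F T A ∧ SatO Obs χ F T A) ∧ _ ↔ _
    constructor
    · rintro ⟨⟨h1, h2⟩, h3⟩
      exact ⟨h1, fun ξ hξ => hξ.elim (fun e => e ▸ h2) (h3 ξ)⟩
    · rintro ⟨h1, h2⟩
      exact ⟨⟨h1, h2 χ (Or.inl rfl)⟩, fun ξ hξ => h2 ξ (Or.inr hξ)⟩

lemma satO_bigConj (l : List (Form S)) :
    SatO Obs (bigConj l) F T A ↔ ∀ χ ∈ l, SatO Obs χ F T A := by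
  cases l with
  | nil => simp [bigConj, satO_topF]
  | cons φ l =>
    simp only [bigConj, satO_foldl_conj, List.mem_cons]
    constructor
    · rintro ⟨h1, h2⟩ ξ hξ
      exact hξ.elim (fun e => e ▸ h1) (h2 ξ)
    · intro h
      exact ⟨h φ (Or.inl rfl), fun ξ hξ => h ξ (Or.inr hξ)⟩

lemma satO_obsEq (o : ∀ W : {W : S.Var // W ∈ Obs}, S.Val W.val) :
    SatO Obs (obsEq Obs o) F T A ↔ ∀ W : {W : S.Var // W ∈ Obs}, A W.val = o W := by
  rw [obsEq, satO_bigConj]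
  constructor
  · intro h W
    exact h _ (List.mem_map.2 ⟨W, by simp, rfl⟩)
  · rintro h χ hχ
    rcases List.mem_map.1 hχ with ⟨W, _, rfl⟩
    exact h W

end PDAux

/-- Theorem: soundness of the prediction axiom (PD).  Every instance of
`[X⃗:=x⃗]Kψ ↔ ⋁_{o⃗ ∈ R(O⃗)} ([X⃗:=x⃗]O⃗=o⃗ ∧ [[X⃗:=x⃗]O⃗=o⃗ !] K[X⃗:=x⃗]ψ)` is true at
every pointed epistemic causal model with observables under `⊨ᴼ` (including the
case where the intervention is empty). -/
theorem pd_sound (S : Sig) (Obs : Finset S.Var)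
    (F : StructFuns S) (T : Set (Env S)) (A : Env S)
    (hRec : RecursiveF F) (hne : T.Nonempty) (hComp : ∀ B ∈ T, Complies F B)
    (hObs : ∀ B ∈ T, ∀ C ∈ T, ∀ W ∈ Obs, B W = C W) (hA : A ∈ T)
    (I : Intervention S) (ψ : Form S) :
    SatO Obs (pdForm Obs I ψ) F T A := by
  classical
  set A' : Env S := intVal F A I with hA'def
  set F' : StructFuns S := intF F I with hF'def
  set T' : Set (Env S) :=
    {B' | ∃ B ∈ T, B' = intVal F B I ∧ ∀ W ∈ Obs, B' W = A' W} with hT'def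
  -- satisfaction of [I](O=o') at any point
  have hsatα : ∀ (o' : ∀ W : {W : S.Var // W ∈ Obs}, S.Val W.val)
      (T₀ : Set (Env S)) (B : Env S),
      SatO Obs (Form.int I (obsEq Obs o')) F T₀ B ↔
        ∀ W : {W : S.Var // W ∈ Obs}, intVal F B I W.val = o' W := by
    intro o' T₀ B
    show SatO Obs (obsEq Obs o') (intF F I) _ (intVal F B I) ↔ _
    exact satO_obsEq o'
  -- key set equality
  have key : ∀ (o' : ∀ W : {W : S.Var // W ∈ Obs}, S.Val W.val),
      (∀ W : {W : S.Var // W ∈ Obs}, o' W = A' W.val) →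
      ∀ B : Env S, (∀ W ∈ Obs, intVal F B I W = A' W) →
      {B' | ∃ C ∈ {C | C ∈ T ∧ SatO Obs (Form.int I (obsEq Obs o')) F T C},
          B' = intVal F C I ∧ ∀ W ∈ Obs, B' W = intVal F B I W} = T' := by
    intro o' ho' B hB
    ext B'
    constructor
    · rintro ⟨C, ⟨hCT, _⟩, rfl, hagr⟩
      exact ⟨C, hCT, rfl, fun W hW => (hagr W hW).trans (hB W hW)⟩
    · rintro ⟨C, hCT, rfl, hagr⟩
      refine ⟨C, ⟨hCT, (hsatα o' T C).2 ?_⟩, rfl, ?_⟩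
      · intro W
        rw [ho' W]
        exact hagr W.val W.prop
      · intro W hW
        rw [hagr W hW, hB W hW]
  -- unfold statements
  have hLiff : SatO Obs (Form.int I (Form.know ψ)) F T A ↔
      ∀ B' ∈ T', SatO Obs ψ F' T' B' := Iff.rfl
  set o : ∀ W : {W : S.Var // W ∈ Obs}, S.Val W.val := fun W => A' W.val with hodef
  rw [pdForm]
  show SatO Obs (Form.conj _ _) F T A
  rw [show ∀ φ χ : Form S, SatO Obs (Form.conj φ χ) F T A =
      (SatO Obs φ F T A ∧ SatO Obs χ F T A) from fun _ _ => rfl,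
    satO_impl, satO_impl, satO_bigOr]
  constructor
  · -- forward direction
    intro hL
    refine ⟨_, List.mem_map.2 ⟨o, by simp [obsTuples], rfl⟩, ?_⟩
    refine ⟨(hsatα o T A).2 fun W => rfl, ?_⟩
    intro _
    rintro B ⟨hBT, hBα⟩
    have hB : ∀ W ∈ Obs, intVal F B I W = A' W :=
      fun W hW => (hsatα o T B).1 hBα ⟨W, hW⟩
    show SatO Obs ψ F' _ (intVal F B I)
    rw [key o (fun _ => rfl) B hB]
    exact hLiff.1 hL (intVal F B I) ⟨B, hBT, rfl, hB⟩
  · -- backward direction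
    rintro ⟨χ, hχ, hsat⟩
    rcases List.mem_map.1 hχ with ⟨o', _, rfl⟩
    obtain ⟨hEq, hAnn⟩ := hsat
    have hAo' : ∀ W : {W : S.Var // W ∈ Obs}, A' W.val = o' W := (hsatα o' T A).1 hEq
    have ho' : ∀ W : {W : S.Var // W ∈ Obs}, o' W = A' W.val := fun W => (hAo' W).symm
    have hK := hAnn hEq
    rw [hLiff]
    rintro B' ⟨B, hBT, rfl, hagr⟩
    have hBα : SatO Obs (Form.int I (obsEq Obs o')) F T B :=
      (hsatα o' T B).2 fun W => (hagr W.val W.prop).trans (hAo' W)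
    have hB : ∀ W ∈ Obs, intVal F B I W = A' W := hagr
    have := hK B ⟨hBT, hBα⟩
    show SatO Obs ψ F' T' (intVal F B I)
    rw [← key o' ho' B hB]
    exact this
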